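/- There exists an integer T₀ ≥ 2 such that for all integers T ≥ T₀ and all integers N ≥ 1, F_FOD(N,T) < F_FD(N,T). That is, once the number of time periods T is large enough, the forward-orthogonal-deviations GMM formula requires strictly fewer flops than the first-difference GMM formula, uniformly over the number of individuals N. -/

import Mathlib

/-- Number of moment restrictions: m(T) = T(T-1)/2. -/
noncomputable def mGMM (T : ℕ) : ℝ := (T : ℝ) * ((T : ℝ) - 1) / 2

/-- Total flop count of the first-difference (FD) one-step GMM formula. -/
noncomputable def F_FD (N T : ℕ) : ℝ :=
  2 * ((N : ℝ) * ((T : ℝ) - 1) * (2 * (T : ℝ) - 1)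
        + mGMM T * (2 * (N : ℝ) * ((T : ℝ) - 1) - 1))
    + ((T : ℝ) - 1) ^ 2 * (2 * (T : ℝ) - 1)
    + (N : ℝ) * mGMM T * ((T : ℝ) - 1) * (2 * (T : ℝ) - 3)
    + (N : ℝ) * (mGMM T) ^ 2 * (2 * (T : ℝ) - 3)
    + ((N : ℝ) - 1) * (mGMM T) ^ 2
    + (mGMM T) ^ 3
    + mGMM T * (2 * mGMM T - 1)
    + 2 * (2 * mGMM T - 1)

/-- Total flop count of the forward-orthogonal-deviations (FOD) one-step GMM formula. -/
noncomputable def F_FOD (N T : ℕ) : ℝ :=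
  2 * ((N : ℝ) * ((T : ℝ) - 1) * (2 * (T : ℝ) - 1)
        + (2 * (N : ℝ) - 1) * (T : ℝ) * ((T : ℝ) - 1) / 2)
    + (2 * (N : ℝ) - 1) * (T : ℝ) * (2 * (T : ℝ) - 1) * ((T : ℝ) - 1) / 6
    + (T : ℝ) ^ 2 * ((T : ℝ) - 1) ^ 2 / 4
    + (T : ℝ) * ((T : ℝ) - 1) * (4 * (T : ℝ) - 5) / 6
    + ((T : ℝ) * ((T : ℝ) - 2) + 1)
    + ((T : ℝ) - 2)

/-! Shifting to `T = k + 2` and `N = j + 1`, the difference `F_FD - F_FOD` becomes a polynomial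
in `k` and `j` with positive coefficients (its leading term `k ^ 6 / 8` comes from the `m ^ 3`
cost of inverting `A_N`), so the FOD formula is already cheaper from `T₀ = 2` on. -/

theorem F_FD_sub_F_FOD (j k : ℕ) :
    F_FD (j + 1) (k + 2) - F_FOD (j + 1) (k + 2) =
      (5 + 51 / 2 * k + 149 / 4 * k ^ 2 + 199 / 8 * k ^ 3 + 69 / 8 * k ^ 4 + 13 / 8 * k ^ 5
          + 1 / 8 * k ^ 6)
        + j * (1 + 73 / 6 * k + 45 / 2 * k ^ 2 + 46 / 3 * k ^ 3 + 9 / 2 * k ^ 4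
          + 1 / 2 * k ^ 5) := by
  simp only [F_FD, F_FOD, mGMM]
  push_cast
  ring

theorem F_FOD_lt_F_FD (j k : ℕ) : F_FOD (j + 1) (k + 2) < F_FD (j + 1) (k + 2) := by
  rw [← sub_pos, F_FD_sub_F_FOD]
  positivity

/-- For all sufficiently large `T`, the FOD flop count is strictly smaller
than the FD flop count, uniformly in `N ≥ 1`. -/
theorem fod_eventually_cheaper :
    ∃ T₀ : ℕ, 2 ≤ T₀ ∧ ∀ T : ℕ, T₀ ≤ T → ∀ N : ℕ, 1 ≤ N →
      F_FOD N T < F_FD N T := by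
  refine ⟨2, le_rfl, fun T hT N hN => ?_⟩
  obtain ⟨k, rfl⟩ : ∃ k, T = k + 2 := ⟨T - 2, by omega⟩
  obtain ⟨j, rfl⟩ : ∃ j, N = j + 1 := ⟨N - 1, by omega⟩
  exact F_FOD_lt_F_FD j k
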